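/- For r > 0 and σ ∈ {1, −1} define v_{r,σ} : ℝ → ℝ by v_{r,σ}(x) = ∫_0^x sinh(r)/(cosh(r) − σ·cos y) dy. Let n ≥ 1, let K ≥ 3 and L ≥ 1 be natural numbers, let r_1,…,r_K > 0, s_1,…,s_L > 0 and σ_1,…,σ_K, τ_1,…,τ_L ∈ {1,−1}. Then there exists a unique ξ = (ξ_1,…,ξ_n) ∈ ℝ^n satisfying, for every j ∈ {1,…,n}, the system Σ_{k=1}^K v_{r_k,σ_k}(ξ_j) + Σ_{j′≠j} Σ_{l=1}^L ( v_{s_l,τ_l}(ξ_{j′} + ξ_j) − v_{s_l,τ_l}(ξ_{j′} − ξ_j) ) = 2π(n+1−j). Moreover this solution satisfies π(n+1−j)/κ₋ ≤ ξ_j ≤ π(n+1−j)/κ₊ for all 1 ≤ j ≤ n, and π(j′−j)/κ₋ ≤ ξ_j − ξ_{j′} ≤ π(j′−j)/κ₊ for all 1 ≤ j < j′ ≤ n, where κ₋ = (1/2) Σ_{k=1}^K coth(r_k/2) + (n−1) Σ_{l=1}^L coth(s_l/2) and κ₊ = (1/2) Σ_{k=1}^K tanh(r_k/2) + (n−1)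 Σ_{l=1}^L tanh(s_l/2). -/

import Mathlib

/-!
Each `v_{r,σ}` has derivative `sinh r / (cosh r - σ cos y)`, which lies between `tanh (r/2)` and
`coth (r/2)`. Hence the `j`-th equation, as a function of `ξ_j` alone, increases with slope between
`2κ₊` and `2κ₋` and vanishes at `ξ_j = 0`; likewise the difference of the `j`-th and `j'`-th
equations is such a function of `ξ_j - ξ_{j'}`. This gives the bounds.
Uniqueness: at a coordinate `j` where `|ξ_i - η_i|` is largest, the `j`-th equation is strictly
larger for the solution with the larger `j`-th coordinate.
Existence: the equations are the partial derivatives of a potential, and a minimiser of the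
potential over a box on whose faces every equation has the right sign is a critical point.
-/

open Real Finset

/-- The trigonometric function `v_{r,σ}(x) = ∫_0^x sinh r / (cosh r − σ cos y) dy`. -/
noncomputable def vTrig (r σ x : ℝ) : ℝ :=
  ∫ y in (0:ℝ)..x, Real.sinh r / (Real.cosh r - σ * Real.cos y)

/-- The trigonometric type B Bethe critical-point system at `α = 0`, `ε = 0`, `μ = ρ`. -/
def trigBSys (n K L : ℕ) (r : Fin K → ℝ) (σ : Fin K → ℝ)
    (s : Fin L → ℝ) (τ : Fin L → ℝ) (ξ : Fin n → ℝ) : Prop :=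
  ∀ j : Fin n,
    (∑ k, vTrig (r k) (σ k) (ξ j)) +
    (∑ j' ∈ Finset.univ.erase j, ∑ l,
      (vTrig (s l) (τ l) (ξ j' + ξ j) - vTrig (s l) (τ l) (ξ j' - ξ j)))
    = 2 * π * ((n : ℝ) - j.val)

theorem intervalIntegral_zero_neg_of_even {f : ℝ → ℝ} (hf : Function.Even f) (x : ℝ) :
    ∫ y in (0:ℝ)..-x, f y = -∫ y in (0:ℝ)..x, f y := by
  have h := intervalIntegral.integral_comp_neg (a := 0) (b := x) f
  simp only [hf _, neg_zero] at h
  rw [h, intervalIntegral.integral_symm]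

theorem intervalIntegral_zero_neg_of_odd {f : ℝ → ℝ} (hf : Function.Odd f) (x : ℝ) :
    ∫ y in (0:ℝ)..-x, f y = ∫ y in (0:ℝ)..x, f y := by
  have h := intervalIntegral.integral_comp_neg (a := 0) (b := x) f
  simp only [hf _, neg_zero, intervalIntegral.integral_neg] at h
  rw [intervalIntegral.integral_symm, ← h, neg_neg]

def SlopeBounded (m M : ℝ) (f : ℝ → ℝ) : Prop :=
  ∀ ⦃x y : ℝ⦄, x ≤ y → m * (y - x) ≤ f y - f x ∧ f y - f x ≤ M * (y - x)

namespace SlopeBounded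

variable {m M m' M' : ℝ} {f g : ℝ → ℝ}

theorem of_hasDerivAt {f' : ℝ → ℝ} (hf : ∀ x, HasDerivAt f (f' x) x)
    (hm : ∀ x, m ≤ f' x) (hM : ∀ x, f' x ≤ M) : SlopeBounded m M f := by
  have hd : Differentiable ℝ f := fun x => (hf x).differentiableAt
  intro x y hxy
  exact ⟨mul_sub_le_image_sub_of_le_deriv hd (fun x => (hf x).deriv ▸ hm x) hxy,
    image_sub_le_mul_sub_of_deriv_le hd (fun x => (hf x).deriv ▸ hM x) hxy⟩

theorem add (hf : SlopeBounded m M f) (hg : SlopeBounded m' M' g) :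
    SlopeBounded (m + m') (M + M') (fun x => f x + g x) := by
  intro x y hxy
  have := hf hxy
  have := hg hxy
  constructor <;> linarith

theorem sum {ι : Type*} (s : Finset ι) {m M : ι → ℝ} {f : ι → ℝ → ℝ}
    (hf : ∀ i ∈ s, SlopeBounded (m i) (M i) (f i)) :
    SlopeBounded (∑ i ∈ s, m i) (∑ i ∈ s, M i) (fun x => ∑ i ∈ s, f i x) := by
  intro x y hxy
  rw [← sum_sub_distrib, sum_mul, sum_mul]
  exact ⟨sum_le_sum fun i hi => (hf i hi hxy).1, sum_le_sum fun i hi => (hf i hi hxy).2⟩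

theorem comp_const_add (hf : SlopeBounded m M f) (c : ℝ) :
    SlopeBounded m M (fun z => f (c + z)) := by
  intro x y hxy
  simpa only [add_sub_add_left_eq_sub] using hf (show c + x ≤ c + y by linarith)

theorem neg_comp_const_sub (hf : SlopeBounded m M f) (c : ℝ) :
    SlopeBounded m M (fun z => -f (c - z)) := by
  intro x y hxy
  have := hf (sub_le_sub_left hxy c)
  constructor <;> linarith

theorem strictMono (hf : SlopeBounded m M f) (hm : 0 < m) : StrictMono f :=
  fun x y hxy => by nlinarith [(hf hxy.le).1]

theorem monotone (hf : SlopeBounded m M f) (hm : 0 ≤ m) : Monotone f :=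
  fun x y hxy => by nlinarith [(hf hxy).1]

theorem div_le_sub_and_sub_le_div (hf : SlopeBounded m M f) (hm : 0 < m) {x y : ℝ}
    (h : 0 ≤ f y - f x) : (f y - f x) / M ≤ y - x ∧ y - x ≤ (f y - f x) / m := by
  have hxy : x ≤ y := by
    by_contra! hyx
    nlinarith [(hf hyx.le).1]
  have hmM : m ≤ M := by nlinarith [hf zero_le_one]
  have ⟨hlow, hupp⟩ := hf hxy
  exact ⟨(div_le_iff₀ (by linarith)).2 (by linarith), (le_div_iff₀ hm).2 (by linarith)⟩

end SlopeBounded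

theorem deriv_eq_zero_of_isMinOn_Icc {ψ g : ℝ → ℝ} {a b x₀ : ℝ}
    (hmin : IsMinOn ψ (Set.Icc a b) x₀) (hx₀ : x₀ ∈ Set.Icc a b) (hψ : HasDerivAt ψ (g x₀) x₀)
    (ha : g a < 0) (hb : 0 < g b) : g x₀ = 0 := by
  have hfirst : ∀ y ∈ Set.Icc a b, 0 ≤ (y - x₀) * g x₀ := fun y hy => by
    simpa using hmin.localize.hasFDerivWithinAt_nonneg hψ.hasFDerivAt.hasFDerivWithinAt
      (sub_mem_posTangentConeAt_of_segment_subset ((convex_Icc a b).segment_subset hx₀ hy))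
  have hleft := hfirst a ⟨le_rfl, hx₀.1.trans hx₀.2⟩
  have hright := hfirst b ⟨hx₀.1.trans hx₀.2, le_rfl⟩
  rcases lt_trichotomy (g x₀) 0 with hneg | hzero | hpos
  · obtain rfl : x₀ = b := le_antisymm hx₀.2 (by nlinarith)
    linarith
  · exact hzero
  · obtain rfl : x₀ = a := le_antisymm (by nlinarith) hx₀.1
    linarith

section UpdateSums

variable {ι : Type*} [Fintype ι] [DecidableEq ι]

theorem hasDerivAt_sum_update {U : ι → ℝ → ℝ} {ξ : ι → ℝ} {j : ι} {x d : ℝ}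
    (h : HasDerivAt (U j) d x) : HasDerivAt (fun z => ∑ i, U i (Function.update ξ j z i)) d x := by
  have hsplit : (fun z => ∑ i, U i (Function.update ξ j z i))
      = fun z => U j z + ∑ i ∈ univ.erase j, U i (ξ i) := by
    funext z
    rw [← add_sum_erase _ _ (mem_univ j), Function.update_self]
    congr 1
    exact sum_congr rfl fun i hi => by rw [Function.update_of_ne (ne_of_mem_erase hi)]
  rw [hsplit]
  exact h.add_const _

theorem sum_sum_erase_update_of_symm {G : ℝ → ℝ → ℝ} (hG : ∀ a b, G a b = G b a)
    (ξ : ι → ℝ) (j : ι) (z : ℝ) :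
    ∑ i, ∑ i' ∈ univ.erase i, G (Function.update ξ j z i') (Function.update ξ j z i)
      = 2 * ∑ i ∈ univ.erase j, G (ξ i) z
        + ∑ i ∈ univ.erase j, ∑ i' ∈ (univ.erase i).erase j, G (ξ i') (ξ i) := by
  have hrow : ∀ i ∈ univ.erase j,
      ∑ i' ∈ univ.erase i, G (Function.update ξ j z i') (Function.update ξ j z i)
        = G (ξ i) z + ∑ i' ∈ (univ.erase i).erase j, G (ξ i') (ξ i) := by
    intro i hi
    have hij := ne_of_mem_erase hi
    rw [← add_sum_erase _ _ (mem_erase.2 ⟨hij.symm, mem_univ j⟩), Function.update_self,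
      Function.update_of_ne hij, hG]
    congr 1
    exact sum_congr rfl fun i' hi' => by rw [Function.update_of_ne (ne_of_mem_erase hi')]
  have hcol : ∑ i' ∈ univ.erase j, G (Function.update ξ j z i') (Function.update ξ j z j)
      = ∑ i ∈ univ.erase j, G (ξ i) z :=
    sum_congr rfl fun i hi => by
      rw [Function.update_self, Function.update_of_ne (ne_of_mem_erase hi)]
  rw [← add_sum_erase _ _ (mem_univ j), hcol, sum_congr rfl hrow, sum_add_distrib]
  ring

theorem hasDerivAt_sum_sum_erase_update_of_symm {G : ℝ → ℝ → ℝ} (hG : ∀ a b, G a b = G b a)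
    {ξ : ι → ℝ} {j : ι} {x : ℝ} {g : ι → ℝ} (h : ∀ i, HasDerivAt (G (ξ i)) (g i) x) :
    HasDerivAt
      (fun z => ∑ i, ∑ i' ∈ univ.erase i, G (Function.update ξ j z i') (Function.update ξ j z i))
      (2 * ∑ i ∈ univ.erase j, g i) x := by
  simp only [sum_sum_erase_update_of_symm hG]
  exact ((HasDerivAt.fun_sum fun i _ => h i).const_mul 2).add_const _

end UpdateSums

theorem tanh_half_eq_sinh_div_cosh_add_one (r : ℝ) :
    tanh (r / 2) = sinh r / (cosh r + 1) := by
  obtain ⟨t, rfl⟩ : ∃ t, r = 2 * t := ⟨r / 2, by ring⟩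
  have hc : cosh t ≠ 0 := (cosh_pos t).ne'
  rw [mul_div_cancel_left₀ t two_ne_zero, tanh_eq_sinh_div_cosh, sinh_two_mul, cosh_two_mul]
  field_simp
  rw [cosh_sq]
  ring

theorem inv_tanh_half_eq_sinh_div_cosh_sub_one {r : ℝ} (hr : r ≠ 0) :
    (tanh (r / 2))⁻¹ = sinh r / (cosh r - 1) := by
  obtain ⟨t, rfl⟩ : ∃ t, r = 2 * t := ⟨r / 2, by ring⟩
  have hs : sinh t ≠ 0 := by simpa using hr
  rw [mul_div_cancel_left₀ t two_ne_zero, tanh_eq_sinh_div_cosh, inv_div, sinh_two_mul,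
    cosh_two_mul, cosh_sq, show sinh t ^ 2 + 1 + sinh t ^ 2 - 1 = 2 * sinh t * sinh t by ring,
    mul_div_mul_left _ _ (mul_ne_zero two_ne_zero hs)]

section vTrig

variable {r σ : ℝ}

theorem cosh_sub_one_le_cosh_sub_mul_cos (hσ : |σ| ≤ 1) (y : ℝ) :
    cosh r - 1 ≤ cosh r - σ * cos y ∧ cosh r - σ * cos y ≤ cosh r + 1 := by
  have := abs_le.1 (show |σ * cos y| ≤ 1 by
    rw [abs_mul]; exact mul_le_one₀ hσ (abs_nonneg _) (abs_cos_le_one y))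
  constructor <;> linarith

theorem tanh_half_le_sinh_div (hr : 0 < r) (hσ : |σ| ≤ 1) (y : ℝ) :
    tanh (r / 2) ≤ sinh r / (cosh r - σ * cos y) ∧
      sinh r / (cosh r - σ * cos y) ≤ (tanh (r / 2))⁻¹ := by
  have hcosh : 0 < cosh r - 1 := sub_pos.2 (one_lt_cosh.2 hr.ne')
  have hsinh : 0 < sinh r := sinh_pos_iff.2 hr
  obtain ⟨h₁, h₂⟩ := cosh_sub_one_le_cosh_sub_mul_cos (r := r) hσ y
  rw [inv_tanh_half_eq_sinh_div_cosh_sub_one hr.ne', tanh_half_eq_sinh_div_cosh_add_one]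
  exact ⟨div_le_div_of_nonneg_left hsinh.le (by linarith) h₂,
    div_le_div_of_nonneg_left hsinh.le hcosh h₁⟩

theorem hasDerivAt_vTrig (hr : 0 < r) (hσ : |σ| ≤ 1) (x : ℝ) :
    HasDerivAt (vTrig r σ) (sinh r / (cosh r - σ * cos x)) x := by
  have hcosh : 0 < cosh r - 1 := sub_pos.2 (one_lt_cosh.2 hr.ne')
  refine (Continuous.integral_hasStrictDerivAt ?_ 0 x).hasDerivAt
  exact continuous_const.div (by fun_prop) fun y =>
    (hcosh.trans_le (cosh_sub_one_le_cosh_sub_mul_cos hσ y).1).ne'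

theorem slopeBounded_vTrig (hr : 0 < r) (hσ : |σ| ≤ 1) :
    SlopeBounded (tanh (r / 2)) (tanh (r / 2))⁻¹ (vTrig r σ) :=
  .of_hasDerivAt (hasDerivAt_vTrig hr hσ) (fun y => (tanh_half_le_sinh_div hr hσ y).1)
    fun y => (tanh_half_le_sinh_div hr hσ y).2

theorem continuous_vTrig (hr : 0 < r) (hσ : |σ| ≤ 1) : Continuous (vTrig r σ) :=
  continuous_iff_continuousAt.2 fun x => (hasDerivAt_vTrig hr hσ x).continuousAt

theorem vTrig_zero (r σ : ℝ) : vTrig r σ 0 = 0 := intervalIntegral.integral_same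

theorem vTrig_odd (r σ : ℝ) : Function.Odd (vTrig r σ) :=
  intervalIntegral_zero_neg_of_even fun y => by rw [cos_neg]

end vTrig

theorem tanh_pos_of_pos {x : ℝ} (hx : 0 < x) : 0 < tanh x := by
  rw [tanh_eq_sinh_div_cosh]
  exact div_pos (sinh_pos_iff.2 hx) (cosh_pos x)

section System

variable {n K L : ℕ} {r σ : Fin K → ℝ} {s τ : Fin L → ℝ}

variable (r σ) in
noncomputable def siteTerm (z : ℝ) : ℝ := ∑ k, vTrig (r k) (σ k) z

variable (s τ) in
noncomputable def pairTerm (c z : ℝ) : ℝ :=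
  ∑ l, (vTrig (s l) (τ l) (c + z) - vTrig (s l) (τ l) (c - z))

variable (r σ s τ) in
noncomputable def trigBLhs (ξ : Fin n → ℝ) (j : Fin n) : ℝ :=
  siteTerm r σ (ξ j) + ∑ i ∈ univ.erase j, pairTerm s τ (ξ i) (ξ j)

/-- `kappa tanh` and `kappa (tanh ·)⁻¹` are the constants `κ₊` and `κ₋`. -/
noncomputable def kappa (f : ℝ → ℝ) (n : ℕ) (r : Fin K → ℝ) (s : Fin L → ℝ) : ℝ :=
  1 / 2 * ∑ k, f (r k / 2) + ((n : ℝ) - 1) * ∑ l, f (s l / 2)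

theorem sum_tanh_half_pos (hK : 0 < K) (hr : ∀ k, 0 < r k) : 0 < ∑ k, tanh (r k / 2) :=
  sum_pos (fun k _ => tanh_pos_of_pos (half_pos (hr k))) ⟨⟨0, hK⟩, mem_univ _⟩

theorem kappa_tanh_pos (hK : 0 < K) (hn : 0 < n) (hr : ∀ k, 0 < r k) (hs : ∀ l, 0 < s l) :
    0 < kappa tanh n r s := by
  have hT := sum_tanh_half_pos hK hr
  have hS : 0 ≤ ∑ l, tanh (s l / 2) :=
    sum_nonneg fun l _ => (tanh_pos_of_pos (half_pos (hs l))).le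
  have hn' : (0 : ℝ) ≤ n - 1 := by rw [sub_nonneg]; exact_mod_cast hn
  unfold kappa
  positivity

theorem siteTerm_zero : siteTerm r σ 0 = 0 := by simp [siteTerm, vTrig_zero]

theorem pairTerm_zero_right (c : ℝ) : pairTerm s τ c 0 = 0 := by simp [pairTerm]

theorem pairTerm_sub_pairTerm_swap (a b : ℝ) :
    pairTerm s τ b a - pairTerm s τ a b = pairTerm s τ 0 (a - b) := by
  simp only [pairTerm, ← sum_sub_distrib, zero_add, zero_sub, neg_sub]
  exact sum_congr rfl fun l _ => by rw [add_comm b a]; ring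

theorem slopeBounded_siteTerm (hr : ∀ k, 0 < r k) (hσ : ∀ k, |σ k| ≤ 1) :
    SlopeBounded (∑ k, tanh (r k / 2)) (∑ k, (tanh (r k / 2))⁻¹) (siteTerm r σ) :=
  .sum _ fun k _ => slopeBounded_vTrig (hr k) (hσ k)

theorem slopeBounded_pairTerm (hs : ∀ l, 0 < s l) (hτ : ∀ l, |τ l| ≤ 1) (c : ℝ) :
    SlopeBounded (2 * ∑ l, tanh (s l / 2)) (2 * ∑ l, (tanh (s l / 2))⁻¹) (pairTerm s τ c) := by
  have h := SlopeBounded.sum univ fun l _ =>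
    ((slopeBounded_vTrig (hs l) (hτ l)).comp_const_add c).add
      ((slopeBounded_vTrig (hs l) (hτ l)).neg_comp_const_sub c)
  simp only [← sub_eq_add_neg, ← two_mul, ← mul_sum] at h
  exact h

theorem pairTerm_le_pairTerm (hs : ∀ l, 0 < s l) (hτ : ∀ l, |τ l| ≤ 1) {c z c' z' : ℝ}
    (hadd : c' + z' ≤ c + z) (hsub : c - z ≤ c' - z') : pairTerm s τ c' z' ≤ pairTerm s τ c z := by
  refine sum_le_sum fun l _ => ?_
  have hmono := (slopeBounded_vTrig (hs l) (hτ l)).monotone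
    (tanh_pos_of_pos (half_pos (hs l))).le
  linarith [hmono hadd, hmono hsub]

theorem trigBLhs_update (ξ : Fin n → ℝ) (j : Fin n) (z : ℝ) :
    trigBLhs r σ s τ (Function.update ξ j z) j
      = siteTerm r σ z + ∑ i ∈ univ.erase j, pairTerm s τ (ξ i) z := by
  unfold trigBLhs
  rw [Function.update_self]
  congr 1
  exact sum_congr rfl fun i hi => by rw [Function.update_of_ne (ne_of_mem_erase hi)]

theorem slopeBounded_trigBLhs_update (hr : ∀ k, 0 < r k) (hσ : ∀ k, |σ k| ≤ 1)
    (hs : ∀ l, 0 < s l) (hτ : ∀ l, |τ l| ≤ 1) (ξ : Fin n → ℝ) (j : Fin n) :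
    SlopeBounded (2 * kappa tanh n r s) (2 * kappa (fun x => (tanh x)⁻¹) n r s)
      (fun z => trigBLhs r σ s τ (Function.update ξ j z) j) := by
  have h := (slopeBounded_siteTerm hr hσ).add
    (SlopeBounded.sum (univ.erase j) fun i _ => slopeBounded_pairTerm hs hτ (ξ i))
  have hcard : ((univ.erase j).card : ℝ) = n - 1 := by
    rw [card_erase_of_mem (mem_univ j), card_univ, Fintype.card_fin, Nat.cast_pred j.pos]
  simp only [sum_const, nsmul_eq_mul, hcard, ← trigBLhs_update] at h
  convert h using 1 <;> unfold kappa <;> ring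

theorem trigBLhs_update_zero (ξ : Fin n → ℝ) (j : Fin n) :
    trigBLhs r σ s τ (Function.update ξ j 0) j = 0 := by
  simp [trigBLhs_update, siteTerm_zero, pairTerm_zero_right]

theorem trigBLhs_sub_trigBLhs (ξ : Fin n → ℝ) {j j' : Fin n} (hjj' : j ≠ j') :
    trigBLhs r σ s τ ξ j - trigBLhs r σ s τ ξ j'
      = siteTerm r σ (ξ j) - siteTerm r σ (ξ j')
        + ∑ i ∈ (univ.erase j).erase j', (pairTerm s τ (ξ i) (ξ j) - pairTerm s τ (ξ i) (ξ j'))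
        + pairTerm s τ 0 (ξ j - ξ j') := by
  unfold trigBLhs
  rw [← add_sum_erase _ _ (mem_erase.2 ⟨hjj'.symm, mem_univ j'⟩),
    ← add_sum_erase _ _ (mem_erase.2 ⟨hjj', mem_univ j⟩), erase_right_comm, sum_sub_distrib,
    ← pairTerm_sub_pairTerm_swap]
  ring

theorem exists_slopeBounded_sub_eq_trigBLhs_sub (hr : ∀ k, 0 < r k) (hσ : ∀ k, |σ k| ≤ 1)
    (hs : ∀ l, 0 < s l) (hτ : ∀ l, |τ l| ≤ 1) (ξ : Fin n → ℝ) {j j' : Fin n} (hjj' : j ≠ j') :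
    ∃ φ : ℝ → ℝ, SlopeBounded (2 * kappa tanh n r s) (2 * kappa (fun x => (tanh x)⁻¹) n r s) φ ∧
      φ (ξ j - ξ j') - φ 0 = trigBLhs r σ s τ ξ j - trigBLhs r σ s τ ξ j' := by
  set E := (univ.erase j).erase j'
  refine ⟨fun t => siteTerm r σ (ξ j' + t) + ∑ i ∈ E, pairTerm s τ (ξ i) (ξ j' + t)
    + pairTerm s τ 0 t, ?_, ?_⟩
  · have h := (((slopeBounded_siteTerm hr hσ).comp_const_add (ξ j')).add
      (SlopeBounded.sum E fun i _ => (slopeBounded_pairTerm hs hτ (ξ i)).comp_const_add (ξ j'))).add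
      (slopeBounded_pairTerm hs hτ 0)
    have hn : 2 ≤ n := by
      have := Fin.val_ne_of_ne hjj'
      omega
    have hcard' : (E.card : ℝ) = n - 2 := by
      rw [card_erase_of_mem (mem_erase.2 ⟨hjj'.symm, mem_univ j'⟩), card_erase_of_mem (mem_univ j),
        card_univ, Fintype.card_fin, Nat.sub_sub, Nat.cast_sub hn]
      norm_num
    simp only [sum_const, nsmul_eq_mul, hcard'] at h
    convert h using 1 <;> unfold kappa <;> ring
  · dsimp only
    rw [trigBLhs_sub_trigBLhs ξ hjj', add_sub_cancel, add_zero, pairTerm_zero_right,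
      sum_sub_distrib]
    ring

theorem trigBLhs_lt_trigBLhs_of_max (hK : 0 < K) (hr : ∀ k, 0 < r k) (hσ : ∀ k, |σ k| ≤ 1)
    (hs : ∀ l, 0 < s l) (hτ : ∀ l, |τ l| ≤ 1) {ξ η : Fin n → ℝ} {j : Fin n} (hj : η j < ξ j)
    (hmax : ∀ i, |ξ i - η i| ≤ ξ j - η j) : trigBLhs r σ s τ η j < trigBLhs r σ s τ ξ j := by
  refine add_lt_add_of_lt_of_le ((slopeBounded_siteTerm hr hσ).strictMono
    (sum_tanh_half_pos hK hr) hj) (sum_le_sum fun i _ => pairTerm_le_pairTerm hs hτ ?_ ?_)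
  · linarith [(abs_le.1 (hmax i)).1]
  · linarith [(abs_le.1 (hmax i)).2]

theorem trigBSys_iff {ξ : Fin n → ℝ} :
    trigBSys n K L r σ s τ ξ ↔ ∀ j, trigBLhs r σ s τ ξ j = 2 * π * ((n : ℝ) - j.val) :=
  Iff.rfl

namespace trigBSys

variable {ξ η : Fin n → ℝ}

theorem unique (hK : 0 < K) (hr : ∀ k, 0 < r k) (hσ : ∀ k, |σ k| ≤ 1)
    (hs : ∀ l, 0 < s l) (hτ : ∀ l, |τ l| ≤ 1) (hξ : trigBSys n K L r σ s τ ξ)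
    (hη : trigBSys n K L r σ s τ η) : ξ = η := by
  rcases isEmpty_or_nonempty (Fin n) with hn | hn
  · exact Subsingleton.elim ξ η
  obtain ⟨j, hj⟩ := Finite.exists_max fun i => |ξ i - η i|
  have hle : ∀ {ξ η : Fin n → ℝ}, trigBSys n K L r σ s τ ξ → trigBSys n K L r σ s τ η →
      (∀ i, |ξ i - η i| ≤ |ξ j - η j|) → ξ j ≤ η j := by
    intro ξ η hξ hη hmax
    by_contra! hlt
    have hmax' : ∀ i, |ξ i - η i| ≤ ξ j - η j := fun i => abs_of_pos (sub_pos.2 hlt) ▸ hmax i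
    exact (trigBLhs_lt_trigBLhs_of_max hK hr hσ hs hτ hlt hmax').ne
      (by rw [trigBSys_iff.1 hξ j, trigBSys_iff.1 hη j])
  have hj' : ξ j = η j := le_antisymm (hle hξ hη hj)
    (hle hη hξ fun i => by simpa only [abs_sub_comm] using hj i)
  funext i
  simpa [hj', sub_eq_zero] using hj i

theorem bounds (hK : 0 < K) (hr : ∀ k, 0 < r k) (hσ : ∀ k, |σ k| ≤ 1)
    (hs : ∀ l, 0 < s l) (hτ : ∀ l, |τ l| ≤ 1) (hξ : trigBSys n K L r σ s τ ξ) (j : Fin n) :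
    π * ((n : ℝ) - j.val) / kappa (fun x => (tanh x)⁻¹) n r s ≤ ξ j ∧
      ξ j ≤ π * ((n : ℝ) - j.val) / kappa tanh n r s := by
  have hj : (j.val : ℝ) < n := by exact_mod_cast j.isLt
  have hincr : trigBLhs r σ s τ (Function.update ξ j (ξ j)) j
      - trigBLhs r σ s τ (Function.update ξ j 0) j = 2 * (π * ((n : ℝ) - j.val)) := by
    rw [Function.update_eq_self, trigBLhs_update_zero, trigBSys_iff.1 hξ j]
    ring
  have h := (slopeBounded_trigBLhs_update hr hσ hs hτ ξ j).div_le_sub_and_sub_le_div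
    (mul_pos two_pos (kappa_tanh_pos hK j.pos hr hs)) (by rw [hincr]; nlinarith [pi_pos])
  rwa [hincr, sub_zero, mul_div_mul_left _ _ two_ne_zero, mul_div_mul_left _ _ two_ne_zero] at h

theorem sub_bounds (hK : 0 < K) (hr : ∀ k, 0 < r k) (hσ : ∀ k, |σ k| ≤ 1)
    (hs : ∀ l, 0 < s l) (hτ : ∀ l, |τ l| ≤ 1) (hξ : trigBSys n K L r σ s τ ξ) {j j' : Fin n}
    (hjj' : j < j') :
    π * ((j'.val : ℝ) - j.val) / kappa (fun x => (tanh x)⁻¹) n r s ≤ ξ j - ξ j' ∧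
      ξ j - ξ j' ≤ π * ((j'.val : ℝ) - j.val) / kappa tanh n r s := by
  have hlt : (j.val : ℝ) < j'.val := by exact_mod_cast hjj'
  obtain ⟨φ, hφ, hφξ⟩ := exists_slopeBounded_sub_eq_trigBLhs_sub hr hσ hs hτ ξ hjj'.ne
  have hincr : φ (ξ j - ξ j') - φ 0 = 2 * (π * ((j'.val : ℝ) - j.val)) := by
    rw [hφξ, trigBSys_iff.1 hξ j, trigBSys_iff.1 hξ j']
    ring
  have h := hφ.div_le_sub_and_sub_le_div (mul_pos two_pos (kappa_tanh_pos hK j.pos hr hs))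
    (by rw [hincr]; nlinarith [pi_pos])
  rwa [hincr, sub_zero, mul_div_mul_left _ _ two_ne_zero, mul_div_mul_left _ _ two_ne_zero] at h

end trigBSys

end System

noncomputable def vTrigPrim (r σ x : ℝ) : ℝ := ∫ y in (0:ℝ)..x, vTrig r σ y

theorem hasDerivAt_vTrigPrim {r σ : ℝ} (hr : 0 < r) (hσ : |σ| ≤ 1) (x : ℝ) :
    HasDerivAt (vTrigPrim r σ) (vTrig r σ x) x :=
  ((continuous_vTrig hr hσ).integral_hasStrictDerivAt 0 x).hasDerivAt

theorem continuous_vTrigPrim {r σ : ℝ} (hr : 0 < r) (hσ : |σ| ≤ 1) :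
    Continuous (vTrigPrim r σ) :=
  continuous_iff_continuousAt.2 fun x => (hasDerivAt_vTrigPrim hr hσ x).continuousAt

theorem vTrigPrim_even (r σ : ℝ) : Function.Even (vTrigPrim r σ) :=
  intervalIntegral_zero_neg_of_odd (vTrig_odd r σ)

section Potential

variable {n K L : ℕ} {r σ : Fin K → ℝ} {s τ : Fin L → ℝ}

variable (r σ) in
noncomputable def sitePrim (z : ℝ) : ℝ := ∑ k, vTrigPrim (r k) (σ k) z

variable (s τ) in
noncomputable def pairPrim (c z : ℝ) : ℝ :=
  ∑ l, (vTrigPrim (s l) (τ l) (c + z) + vTrigPrim (s l) (τ l) (c - z))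

variable (n r σ s τ) in
noncomputable def trigBPotential (ξ : Fin n → ℝ) : ℝ :=
  ∑ j : Fin n, (sitePrim r σ (ξ j) - 2 * π * ((n : ℝ) - j.val) * ξ j)
    + 1 / 2 * ∑ j, ∑ i ∈ univ.erase j, pairPrim s τ (ξ i) (ξ j)

theorem pairPrim_comm (c z : ℝ) : pairPrim s τ c z = pairPrim s τ z c :=
  sum_congr rfl fun l _ => by
    rw [add_comm c z, ← vTrigPrim_even _ _ (c - z), neg_sub]

theorem hasDerivAt_sitePrim (hr : ∀ k, 0 < r k) (hσ : ∀ k, |σ k| ≤ 1) (x : ℝ) :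
    HasDerivAt (sitePrim r σ) (siteTerm r σ x) x :=
  HasDerivAt.fun_sum fun k _ => hasDerivAt_vTrigPrim (hr k) (hσ k) x

theorem hasDerivAt_pairPrim (hs : ∀ l, 0 < s l) (hτ : ∀ l, |τ l| ≤ 1) (c x : ℝ) :
    HasDerivAt (pairPrim s τ c) (pairTerm s τ c x) x :=
  HasDerivAt.fun_sum fun l _ =>
    ((hasDerivAt_vTrigPrim (hs l) (hτ l) _).comp_const_add c x).add
      ((hasDerivAt_vTrigPrim (hs l) (hτ l) _).comp_const_sub c x)

theorem continuous_trigBPotential (hr : ∀ k, 0 < r k) (hσ : ∀ k, |σ k| ≤ 1)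
    (hs : ∀ l, 0 < s l) (hτ : ∀ l, |τ l| ≤ 1) : Continuous (trigBPotential n r σ s τ) := by
  have hr' := fun k => continuous_vTrigPrim (hr k) (hσ k)
  have hs' := fun l => continuous_vTrigPrim (hs l) (hτ l)
  unfold trigBPotential sitePrim pairPrim
  fun_prop

theorem hasDerivAt_trigBPotential_update (hr : ∀ k, 0 < r k) (hσ : ∀ k, |σ k| ≤ 1)
    (hs : ∀ l, 0 < s l) (hτ : ∀ l, |τ l| ≤ 1) (ξ : Fin n → ℝ) (j : Fin n) (x : ℝ) :
    HasDerivAt (fun z => trigBPotential n r σ s τ (Function.update ξ j z))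
      (trigBLhs r σ s τ (Function.update ξ j x) j - 2 * π * ((n : ℝ) - j.val)) x := by
  have hsite := hasDerivAt_sum_update (U := fun (i : Fin n) t =>
      sitePrim r σ t - 2 * π * ((n : ℝ) - i.val) * t) (ξ := ξ) (j := j)
    ((hasDerivAt_sitePrim hr hσ x).sub ((hasDerivAt_id x).const_mul _))
  have hpair := hasDerivAt_sum_sum_erase_update_of_symm pairPrim_comm (ξ := ξ) (j := j)
    fun i => hasDerivAt_pairPrim hs hτ (ξ i) x
  refine (hsite.add (hpair.const_mul (1 / 2))).congr_deriv ?_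
  rw [trigBLhs_update]
  ring

end Potential

section Existence

variable {n K L : ℕ} {r σ : Fin K → ℝ} {s τ : Fin L → ℝ}

theorem exists_trigBSys (hn : 0 < n) (hK : 0 < K) (hr : ∀ k, 0 < r k) (hσ : ∀ k, |σ k| ≤ 1)
    (hs : ∀ l, 0 < s l) (hτ : ∀ l, |τ l| ≤ 1) : ∃ ξ, trigBSys n K L r σ s τ ξ := by
  have hκ := kappa_tanh_pos hK hn hr hs
  set M := π * n / kappa tanh n r s + 1 with hM
  have hκM : π * n < kappa tanh n r s * M := by
    rw [hM, mul_add, mul_div_cancel₀ _ hκ.ne', mul_one]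
    linarith
  have hM0 : 0 ≤ M := by rw [hM]; positivity
  set box := Set.univ.pi fun _ : Fin n => Set.Icc (-M) M
  obtain ⟨ξ₀, hξ₀, hmin⟩ := (isCompact_univ_pi fun _ => isCompact_Icc).exists_isMinOn
    (⟨0, fun _ _ => ⟨by simpa using hM0, hM0⟩⟩ : box.Nonempty)
    (continuous_trigBPotential hr hσ hs hτ).continuousOn
  refine ⟨ξ₀, trigBSys_iff.2 fun j => ?_⟩
  have hminj : IsMinOn (fun z => trigBPotential n r σ s τ (Function.update ξ₀ j z))
      (Set.Icc (-M) M) (ξ₀ j) := isMinOn_iff.2 fun z hz => by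
    simpa using isMinOn_iff.1 hmin _ ((Set.update_mem_pi_iff_of_mem hξ₀).2 fun _ => hz)
  have hslope := slopeBounded_trigBLhs_update hr hσ hs hτ ξ₀ j
  have hj : (j.val : ℝ) < n := by exact_mod_cast j.isLt
  have hzero := deriv_eq_zero_of_isMinOn_Icc
    (g := fun z => trigBLhs r σ s τ (Function.update ξ₀ j z) j - 2 * π * ((n : ℝ) - j.val))
    hminj (hξ₀ j trivial)
    (hasDerivAt_trigBPotential_update hr hσ hs hτ ξ₀ j (ξ₀ j)) ?_ ?_
  · simpa [sub_eq_zero] using hzero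
  · have := (hslope (neg_nonpos.2 hM0)).1
    simp only [trigBLhs_update_zero] at this
    nlinarith [pi_pos]
  · have := (hslope hM0).1
    simp only [trigBLhs_update_zero] at this
    nlinarith [pi_pos]

end Existence

theorem trigB_exists_unique_and_bounds_general
    (n K L : ℕ) (hn : 1 ≤ n) (hK : 3 ≤ K)
    (r : Fin K → ℝ) (σ : Fin K → ℝ) (s : Fin L → ℝ) (τ : Fin L → ℝ)
    (hr : ∀ k, 0 < r k) (hs : ∀ l, 0 < s l)
    (hσ : ∀ k, σ k = 1 ∨ σ k = -1) (hτ : ∀ l, τ l = 1 ∨ τ l = -1)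
    (κm κp : ℝ)
    (hκm : κm = (1 / 2) * (∑ k, (Real.tanh (r k / 2))⁻¹) +
      ((n : ℝ) - 1) * (∑ l, (Real.tanh (s l / 2))⁻¹))
    (hκp : κp = (1 / 2) * (∑ k, Real.tanh (r k / 2)) +
      ((n : ℝ) - 1) * (∑ l, Real.tanh (s l / 2))) :
    (∃! ξ : Fin n → ℝ, trigBSys n K L r σ s τ ξ) ∧
    (∀ ξ : Fin n → ℝ, trigBSys n K L r σ s τ ξ →
      (∀ j : Fin n,
        π * ((n : ℝ) - j.val) / κm ≤ ξ j ∧ ξ j ≤ π * ((n : ℝ) - j.val) / κp) ∧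
      (∀ j j' : Fin n, j < j' →
        π * ((j'.val : ℝ) - j.val) / κm ≤ ξ j - ξ j' ∧
        ξ j - ξ j' ≤ π * ((j'.val : ℝ) - j.val) / κp)) := by
  have hK₀ : 0 < K := by omega
  have hσ' : ∀ k, |σ k| ≤ 1 := fun k => by rcases hσ k with h | h <;> simp [h]
  have hτ' : ∀ l, |τ l| ≤ 1 := fun l => by rcases hτ l with h | h <;> simp [h]
  subst hκm hκp
  obtain ⟨ξ, hξ⟩ := exists_trigBSys hn hK₀ hr hσ' hs hτ'
  exact ⟨⟨ξ, hξ, fun η hη => hη.unique hK₀ hr hσ' hs hτ' hξ⟩, fun ξ hξ =>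
    ⟨hξ.bounds hK₀ hr hσ' hs hτ', fun j j' hjj' => hξ.sub_bounds hK₀ hr hσ' hs hτ' hjj'⟩⟩

/-- Existence, uniqueness and two-sided bounds for the solution of the trigonometric
type B Bethe system at `α = 0`. -/
theorem trigB_exists_unique_and_bounds
    (n K L : ℕ) (hn : 1 ≤ n) (hK : 3 ≤ K) (hL : 1 ≤ L)
    (r : Fin K → ℝ) (σ : Fin K → ℝ) (s : Fin L → ℝ) (τ : Fin L → ℝ)
    (hr : ∀ k, 0 < r k) (hs : ∀ l, 0 < s l)
    (hσ : ∀ k, σ k = 1 ∨ σ k = -1) (hτ : ∀ l, τ l = 1 ∨ τ l = -1)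
    (κm κp : ℝ)
    (hκm : κm = (1 / 2) * (∑ k, (Real.tanh (r k / 2))⁻¹) +
      ((n : ℝ) - 1) * (∑ l, (Real.tanh (s l / 2))⁻¹))
    (hκp : κp = (1 / 2) * (∑ k, Real.tanh (r k / 2)) +
      ((n : ℝ) - 1) * (∑ l, Real.tanh (s l / 2))) :
    (∃! ξ : Fin n → ℝ, trigBSys n K L r σ s τ ξ) ∧
    (∀ ξ : Fin n → ℝ, trigBSys n K L r σ s τ ξ →
      (∀ j : Fin n,
        π * ((n : ℝ) - j.val) / κm ≤ ξ j ∧ ξ j ≤ π * ((n : ℝ) - j.val) / κp) ∧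
      (∀ j j' : Fin n, j < j' →
        π * ((j'.val : ℝ) - j.val) / κm ≤ ξ j - ξ j' ∧
        ξ j - ξ j' ≤ π * ((j'.val : ℝ) - j.val) / κp)) :=
  trigB_exists_unique_and_bounds_general n K L hn hK r σ s τ hr hs hσ hτ κm κp hκm hκp
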